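/- Let T > 0, let π = (π_n) be a sequence of partitions of [0,T] with mesh tending to 0, let p > 2, and let x : [0,T] → ℝ be continuous with finite p-th variation along π. Write φ(t) = [x]^(p)_π(t) and assume φ is continuously differentiable with 0 < c ≤ φ′ ≤ C < ∞ on [0,T]. For q > 0 set S^{(q)}_n(t) = Σ_{t^n_{i+1} ≤ t} (φ(t^n_{i+1}) − φ(t^n_i))^{(q−2)/q} (x(t^n_{i+1}) − x(t^n_i))². If for some t ∈ (0,T] the limit lim_{n→∞} S^{(p)}_n(t) exists, is finite and strictly positive, then for every q > p one has lim_{n→∞} S^{(q)}_n(t) = 0. -/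

import Mathlib

/-!
By uniform continuity of `φ` and the vanishing mesh, every increment `Δφ` along `π_n` is
eventually below any `η > 0`. Writing `(q - 2)/q = (p - 2)/p + (2/p - 2/q)`, each term of
`S^(q)_n(t)` is then at most `η ^ (2/p - 2/q)` times the corresponding term of `S^(p)_n(t)`,
and the latter sums stay bounded since they converge.
-/

open Filter Topology

lemma mem_Icc_of_forall_le_succ {α : Type*} [Preorder α] {f : ℕ → α} {N : ℕ}
    (hf : ∀ i < N, f i ≤ f (i + 1)) {i : ℕ} (hi : i ≤ N) : f i ∈ Set.Icc (f 0) (f N) := by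
  have hmono : MonotoneOn f (Set.Iic N) :=
    monotoneOn_of_le_succ Set.ordConnected_Iic fun j _ _ hj => by
      rw [Order.succ_eq_add_one] at hj ⊢
      exact hf j (Nat.lt_of_succ_le hj)
  exact ⟨hmono (Nat.zero_le N) hi (Nat.zero_le i), hmono hi (le_refl N) hi⟩

lemma Real.rpow_le_rpow_sub_mul_rpow {a η α β : ℝ} (ha : 0 ≤ a) (haη : a ≤ η) (hα : 0 ≤ α)
    (hαβ : α ≤ β) : a ^ β ≤ η ^ (β - α) * a ^ α := by
  rcases eq_or_ne β 0 with rfl | hβ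
  · obtain rfl : α = 0 := le_antisymm hαβ hα
    simp
  calc a ^ β = a ^ (β - α) * a ^ α := by
        rw [← Real.rpow_add' ha (by simpa using hβ), sub_add_cancel]
    _ ≤ η ^ (β - α) * a ^ α :=
        mul_le_mul_of_nonneg_right (Real.rpow_le_rpow ha haη (sub_nonneg.2 hαβ))
          (Real.rpow_nonneg ha α)

lemma tendsto_zero_of_forall_eventually_le_mul {ι : Type*} {l : Filter ι} {f g : ι → ℝ} {L : ℝ}
    (hf : ∀ᶠ n in l, 0 ≤ f n) (hg : Tendsto g l (𝓝 L))
    (h : ∀ δ : ℝ, 0 < δ → ∀ᶠ n in l, f n ≤ δ * g n) : Tendsto f l (𝓝 0) := by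
  refine tendsto_order.2 ⟨fun a ha => hf.mono fun n hn => ha.trans_le hn, fun ε hε => ?_⟩
  have hM : 0 < |L| + 1 := by positivity
  filter_upwards [h (ε / (|L| + 1)) (by positivity),
    hg.eventually_lt_const ((le_abs_self L).trans_lt (lt_add_one _))] with n hfn hgn
  calc f n ≤ ε / (|L| + 1) * g n := hfn
    _ < ε / (|L| + 1) * (|L| + 1) := by gcongr
    _ = ε := div_mul_cancel₀ ε hM.ne'

lemma tendsto_sum_rpow_mul_zero {ι κ : Type*} {l : Filter κ} (s : κ → Finset ι)
    (a b : κ → ι → ℝ) {α β L : ℝ} (hα : 0 ≤ α) (hαβ : α < β)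
    (ha : ∀ n, ∀ i ∈ s n, 0 ≤ a n i) (hb : ∀ n, ∀ i ∈ s n, 0 ≤ b n i)
    (hsmall : ∀ η : ℝ, 0 < η → ∀ᶠ n in l, ∀ i ∈ s n, a n i ≤ η)
    (hlim : Tendsto (fun n => ∑ i ∈ s n, a n i ^ α * b n i) l (𝓝 L)) :
    Tendsto (fun n => ∑ i ∈ s n, a n i ^ β * b n i) l (𝓝 0) := by
  refine tendsto_zero_of_forall_eventually_le_mul
    (Eventually.of_forall fun n => Finset.sum_nonneg fun i hi =>
      mul_nonneg (Real.rpow_nonneg (ha n i hi) β) (hb n i hi)) hlim fun δ hδ => ?_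
  have hγ : 0 < β - α := sub_pos.2 hαβ
  set η := δ ^ (β - α)⁻¹
  have hηδ : η ^ (β - α) = δ := by
    rw [← Real.rpow_mul hδ.le, inv_mul_cancel₀ hγ.ne', Real.rpow_one]
  filter_upwards [hsmall η (by positivity)] with n hn
  rw [Finset.mul_sum, ← hηδ]
  refine Finset.sum_le_sum fun i hi => ?_
  rw [← mul_assoc]
  exact mul_le_mul_of_nonneg_right
    (Real.rpow_le_rpow_sub_mul_rpow (ha n i hi) (hn i hi) hα hαβ.le) (hb n i hi)

lemma eventually_abs_sub_lt_of_uniformContinuousOn {κ : Type*} {l : Filter κ} {φ : ℝ → ℝ}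
    {s : Set ℝ} {π : κ → ℕ → ℝ} {N : κ → ℕ} (hφ : UniformContinuousOn φ s)
    (hmem : ∀ n, ∀ i ≤ N n, π n i ∈ s) (hmono : ∀ n, ∀ i < N n, π n i ≤ π n (i + 1))
    (hmesh : ∀ ε : ℝ, 0 < ε → ∀ᶠ n in l, ∀ i < N n, π n (i + 1) - π n i < ε) (η : ℝ)
    (hη : 0 < η) : ∀ᶠ n in l, ∀ i < N n, |φ (π n (i + 1)) - φ (π n i)| < η := by
  obtain ⟨r, hr, hφr⟩ := Metric.uniformContinuousOn_iff.mp hφ η hη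
  filter_upwards [hmesh r hr] with n hn i hi
  have hdist : dist (π n (i + 1)) (π n i) < r := by
    rw [Real.dist_eq, abs_of_nonneg (sub_nonneg.2 (hmono n i hi))]
    exact hn i hi
  simpa only [Real.dist_eq] using hφr _ (hmem n (i + 1) hi) _ (hmem n i hi.le) hdist

theorem scaled_qv_switch_zero_of_lim_pos
    (T : ℝ)
    (π : ℕ → ℕ → ℝ) (N : ℕ → ℕ)
    (hπ0 : ∀ n, π n 0 = 0)
    (hπT : ∀ n, π n (N n) = T)
    (hπmono : ∀ n, ∀ i < N n, π n i < π n (i + 1))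
    (hmesh : ∀ ε : ℝ, 0 < ε → ∀ᶠ n in atTop, ∀ i < N n, π n (i + 1) - π n i < ε)
    (p : ℝ) (hp : 2 < p)
    (x : ℝ → ℝ)
    (φ : ℝ → ℝ)
    (hφcont : ContinuousOn φ (Set.Icc 0 T))
    (hφmono : MonotoneOn φ (Set.Icc 0 T))
    (t : ℝ) (L : ℝ)
    (hlim : Tendsto (fun n => ∑ i ∈ Finset.range (N n),
        if π n (i + 1) ≤ t then
          (φ (π n (i + 1)) - φ (π n i)) ^ ((p - 2) / p)
            * (x (π n (i + 1)) - x (π n i)) ^ 2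
        else 0) atTop (𝓝 L)) :
    ∀ q : ℝ, p < q →
      Tendsto (fun n => ∑ i ∈ Finset.range (N n),
        if π n (i + 1) ≤ t then
          (φ (π n (i + 1)) - φ (π n i)) ^ ((q - 2) / q)
            * (x (π n (i + 1)) - x (π n i)) ^ 2
        else 0) atTop (𝓝 0) := by
  intro q hq
  have hπle : ∀ n, ∀ i < N n, π n i ≤ π n (i + 1) := fun n i hi => (hπmono n i hi).le
  have hmem : ∀ n, ∀ i ≤ N n, π n i ∈ Set.Icc 0 T := fun n i hi => by
    simpa only [hπ0, hπT] using mem_Icc_of_forall_le_succ (hπle n) hi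
  have hexp : (p - 2) / p < (q - 2) / q := by
    rw [div_lt_div_iff₀ (by linarith) (by linarith)]
    nlinarith
  have hosc := eventually_abs_sub_lt_of_uniformContinuousOn
    (isCompact_Icc.uniformContinuousOn_of_continuous hφcont) hmem hπle hmesh
  simp only [← Finset.sum_filter] at hlim ⊢
  refine tendsto_sum_rpow_mul_zero _ _ _ (div_nonneg (by linarith) (by linarith)) hexp
    (fun n i hi => ?_) (fun _ _ _ => sq_nonneg _) (fun η hη => ?_) hlim
  · have hi : i < N n := Finset.mem_range.1 (Finset.mem_filter.1 hi).1
    exact sub_nonneg.2 (hφmono (hmem n i hi.le) (hmem n (i + 1) hi) (hπle n i hi))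
  · filter_upwards [hosc η hη] with n hn i hi
    exact (le_abs_self _).trans (hn i (Finset.mem_range.1 (Finset.mem_filter.1 hi).1)).le
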